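/- Let P be a polynomial of degree d ≥ 2 with connected Julia set J_P and Böttcher coordinate Ψ as in the context, and let 𝒟 be the finest partition of J_P defined there. Then 𝒟 is invariant under P: for every element D ∈ 𝒟, the image P(D) is again an element of 𝒟. -/

import Mathlib

open Set Filter Topology Metric

noncomputable section

/-- The point `e^{2πiα}` on the unit circle corresponding to an angle `α ∈ ℝ/ℤ`. -/
def circlePoint (α : AddCircle (1 : ℝ)) : ℂ := (AddCircle.toCircle α : ℂ)

/-- The basin of infinity of a compact set `Q ⊆ ℂ`: the union of the unbounded
connected components of `ℂ ∖ Q` (for `Q` a continuum there is exactly one). -/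
def basin (Q : Set ℂ) : Set ℂ :=
  {z | z ∉ Q ∧ ¬ Bornology.IsBounded (connectedComponentIn Qᶜ z)}

/-- `Q` is an unshielded continuum: a compact connected nonempty subset of `ℂ`
which coincides with the boundary of its basin of infinity. -/
def Unshielded (Q : Set ℂ) : Prop :=
  IsCompact Q ∧ IsConnected Q ∧ Q = frontier (basin Q)

/-- `Ψ` is a Riemann map for the basin of infinity of `Q`: a holomorphic bijection
from `{z : |z| > 1}` onto the basin of infinity. -/
def RiemannMap (Q : Set ℂ) (Ψ : ℂ → ℂ) : Prop :=
  DifferentiableOn ℂ Ψ {z | 1 < ‖z‖} ∧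
  Set.BijOn Ψ {z | 1 < ‖z‖} (basin Q)

/-- The impression of the external angle `α`. -/
def impression (Ψ : ℂ → ℂ) (α : AddCircle (1 : ℝ)) : Set ℂ :=
  {w | ∃ z : ℕ → ℂ, (∀ n, 1 < ‖z n‖) ∧
        Tendsto z atTop (𝓝 (circlePoint α)) ∧
        Tendsto (fun n => Ψ (z n)) atTop (𝓝 w)}

/-- The external ray of angle `α`. -/
def extRay (Ψ : ℂ → ℂ) (α : AddCircle (1 : ℝ)) : Set ℂ :=
  Ψ '' {z | ∃ r : ℝ, 1 < r ∧ z = (r : ℂ) * circlePoint α}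

/-- The principal set of the external angle `α`. -/
def principalSet (Ψ : ℂ → ℂ) (α : AddCircle (1 : ℝ)) : Set ℂ :=
  closure (extRay Ψ α) \ extRay Ψ α

/-- A closed equivalence relation (its graph, within `Q × Q`, is closed) such that
every impression is contained in a single equivalence class. -/
structure IsClosedEquivRespImp (Q : Set ℂ) (Ψ : ℂ → ℂ) (r : ℂ → ℂ → Prop) : Prop where
  equivalence : Equivalence r
  closedGraph : IsClosed {p : ℂ × ℂ | p.1 ∈ Q ∧ p.2 ∈ Q ∧ r p.1 p.2}
  resp : ∀ α : AddCircle (1 : ℝ), ∀ x ∈ impression Ψ α, ∀ y ∈ impression Ψ α, r x y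

/-- The relation `≈₀`: the intersection of all closed equivalence relations on `Q`
in which every impression is contained in a single class. -/
def finestRel (Q : Set ℂ) (Ψ : ℂ → ℂ) (x y : ℂ) : Prop :=
  ∀ r : ℂ → ℂ → Prop, IsClosedEquivRespImp Q Ψ r → r x y

/-- The partition `𝒟` of `Q` whose elements are the connected components of the
`≈₀`-classes; its elements are the fibers of the finest monotone map of `Q`
onto a locally connected continuum. -/
def finestPartition (Q : Set ℂ) (Ψ : ℂ → ℂ) : Set (Set ℂ) :=
  {D | ∃ x ∈ Q, D = connectedComponentIn {y ∈ Q | finestRel Q Ψ x y} x}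

/-- A ray-compactum in `Q`: a compact subset of `Q` together with a closed set of
angles whose principal sets it contains and in the union of whose impressions
it is contained. -/
structure RayCompactum (Q : Set ℂ) (Ψ : ℂ → ℂ) where
  carrier : Set ℂ
  angles : Set (AddCircle (1 : ℝ))
  carrier_subset : carrier ⊆ Q
  isCompact_carrier : IsCompact carrier
  isClosed_angles : IsClosed angles
  principal_subset : ∀ θ ∈ angles, principalSet Ψ θ ⊆ carrier
  subset_impressions : carrier ⊆ ⋃ θ ∈ angles, impression Ψ θ

/-- `C̃ = C ∪ ⋃_{θ ∈ Θ(C)} R_θ`. -/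
def RayCompactum.tilde {Q : Set ℂ} {Ψ : ℂ → ℂ} (C : RayCompactum Q Ψ) : Set ℂ :=
  C.carrier ∪ ⋃ θ ∈ C.angles, extRay Ψ θ

/-- A ray-compactum `C` ray-separates the sets `A` and `B`. -/
def RaySeparates {Q : Set ℂ} {Ψ : ℂ → ℂ} (C : RayCompactum Q Ψ) (A B : Set ℂ) : Prop :=
  C.carrier ∩ (A ∪ B) = ∅ ∧
  ∀ z ∈ closure (basin Q) \ C.tilde,
    ¬ ((connectedComponentIn (closure (basin Q) \ C.tilde) z ∩ A).Nonempty ∧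
       (connectedComponentIn (closure (basin Q) \ C.tilde) z ∩ B).Nonempty)

/-- A ray-compactum `C` ray-separates a set `X` if it ray-separates some
pair of (distinct) points of `X`. -/
def RaySeparatesSet {Q : Set ℂ} {Ψ : ℂ → ℂ} (C : RayCompactum Q Ψ) (X : Set ℂ) : Prop :=
  ∃ x ∈ X, ∃ y ∈ X, x ≠ y ∧ RaySeparates C {x} {y}

/-- A well-slicing family for a continuum `X ⊆ Q`. -/
structure IsWellSlicing {Q : Set ℂ} {Ψ : ℂ → ℂ}
    (𝒞 : Set (RayCompactum Q Ψ)) (X : Set ℂ) : Prop where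
  nontrivial : ∃ C₁ ∈ 𝒞, ∃ C₂ ∈ 𝒞, C₁ ≠ C₂
  pairwiseDisjoint : ∀ C₁ ∈ 𝒞, ∀ C₂ ∈ 𝒞, C₁ ≠ C₂ → Disjoint C₁.carrier C₂.carrier
  separates : ∀ C ∈ 𝒞, RaySeparatesSet C X
  middle : ∀ C₁ ∈ 𝒞, ∀ C₂ ∈ 𝒞, C₁ ≠ C₂ → ∃ C₃ ∈ 𝒞, RaySeparates C₃ C₁.carrier C₂.carrier

/-- The polynomial `P` as a self-map of `ℂ`. -/
def polyMap (P : Polynomial ℂ) : ℂ → ℂ := fun z => P.eval z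

/-- The filled-in Julia set: the set of points with bounded forward orbit. -/
def filledJulia (P : Polynomial ℂ) : Set ℂ :=
  {z | Bornology.IsBounded (Set.range fun n : ℕ => (polyMap P)^[n] z)}

/-- The Julia set: the boundary of the filled-in Julia set. -/
def juliaSet (P : Polynomial ℂ) : Set ℂ := frontier (filledJulia P)

/-- `Ψ` is a Böttcher coordinate for `P`: a holomorphic bijection from
`{z : |z| > 1}` onto the basin of infinity `ℂ ∖ K_P` conjugating `z ↦ z^d`
to `P`. -/
def BoettcherMap (P : Polynomial ℂ) (Ψ : ℂ → ℂ) : Prop :=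
  DifferentiableOn ℂ Ψ {z | 1 < ‖z‖} ∧
  Set.BijOn Ψ {z | 1 < ‖z‖} (filledJulia P)ᶜ ∧
  ∀ z : ℂ, 1 < ‖z‖ → Ψ (z ^ P.natDegree) = polyMap P (Ψ z)

/-!
The `≈₀`-classes are already connected, so the elements of `𝒟` are exactly the `≈₀`-classes:
"`y` lies in the component of `x` in its class" is again a closed equivalence relation in which
each impression lies in one class. Impressions are connected, being nested intersections of
closures of images of sectors, and closedness holds because the upper limit of a sequence of
continua through convergent points is connected.

So it remains to see that `P` maps each class onto a class. Since `P(Imp θ) = Imp (d θ)`, pulling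
a closed impression-respecting relation back along `P` gives another one, so `P` maps classes into
classes. Conversely, "every class meeting `P⁻¹(u)` meets `P⁻¹(v)`, and vice versa" is closed
because `P` is open and `J_P` is compact, and it respects impressions because `P⁻¹(Imp α)` is
covered by the impressions `Imp θ` with `d θ = α`; hence it contains `≈₀`, which says that the
image of a class is a whole class.
-/

section UpperLimit

variable {X : Type*} [TopologicalSpace X]

def upperLimit (K : ℕ → Set X) : Set X := ⋂ N, closure (⋃ n ≥ N, K n)

lemma isClosed_upperLimit (K : ℕ → Set X) : IsClosed (upperLimit K) :=
  isClosed_iInter fun _ => isClosed_closure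

lemma frequently_inter_nonempty_of_mem_upperLimit {K : ℕ → Set X} {y : X}
    (hy : y ∈ upperLimit K) {U : Set X} (hU : U ∈ 𝓝 y) :
    ∃ᶠ n in atTop, (K n ∩ U).Nonempty := by
  rw [frequently_atTop]
  intro N
  obtain ⟨z, hzU, hz⟩ := mem_closure_iff_nhds.mp (mem_iInter.mp hy N) U hU
  obtain ⟨n, hn, hzn⟩ := mem_iUnion₂.mp hz
  exact ⟨n, hn, z, hzn, hzU⟩

lemma mem_upperLimit_of_eventually {K : ℕ → Set X} {x : X}
    (hx : ∀ U ∈ 𝓝 x, ∀ᶠ n in atTop, (K n ∩ U).Nonempty) : x ∈ upperLimit K := by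
  refine mem_iInter.mpr fun N => mem_closure_iff_nhds.mpr fun U hU => ?_
  obtain ⟨n, hn, z, hzK, hzU⟩ := ((eventually_ge_atTop N).and (hx U hU)).exists
  exact ⟨z, hzU, mem_iUnion₂.mpr ⟨n, hn, hzK⟩⟩

lemma upperLimit_subset {K : ℕ → Set X} {F : Set X} (hF : IsClosed F) (hK : ∀ n, K n ⊆ F) :
    upperLimit K ⊆ F :=
  (iInter_subset _ 0).trans (closure_minimal (iUnion₂_subset fun n _ => hK n) hF)

lemma upperLimit_of_antitone {K : ℕ → Set X} (hK : Antitone K) :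
    upperLimit K = ⋂ n, closure (K n) := by
  refine iInter_congr fun N => congrArg closure (subset_antisymm ?_ ?_)
  · exact iUnion₂_subset fun n hn => hK hn
  · exact subset_iUnion₂_of_subset N le_rfl subset_rfl

lemma mk_mem_of_mem_upperLimit {Y : Type*} [TopologicalSpace Y] {Γ : Set (Y × X)}
    (hΓ : IsClosed Γ) {K : ℕ → Set X} {u : ℕ → Y} {a : Y} (hu : Tendsto u atTop (𝓝 a))
    (hK : ∀ n, ∀ y ∈ K n, (u n, y) ∈ Γ) {w : X} (hw : w ∈ upperLimit K) : (a, w) ∈ Γ := by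
  refine hΓ.closure_subset (mem_closure_iff_nhds.mpr fun t ht => ?_)
  obtain ⟨U, hU, W, hW, hUW⟩ := mem_prod_iff.mp (nhds_prod_eq (x := a) (y := w) ▸ ht)
  obtain ⟨n, hnU, y, hyK, hyW⟩ :=
    ((hu.eventually_mem hU).and_frequently
      (frequently_inter_nonempty_of_mem_upperLimit hw hW)).exists
  exact ⟨(u n, y), hUW ⟨hnU, hyW⟩, hK n y hyK⟩

lemma disjoint_upperLimit_of_eventually_subset_union {K : ℕ → Set X}
    (hK : ∀ n, IsPreconnected (K n)) {U V : Set X} (hU : IsOpen U) (hV : IsOpen V)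
    (hUV : Disjoint U V) (hKUV : ∀ᶠ n in atTop, K n ⊆ U ∪ V)
    (hKU : ∀ᶠ n in atTop, (K n ∩ U).Nonempty) : Disjoint (upperLimit K) V := by
  refine disjoint_left.mpr fun y hyL hyV => ?_
  obtain ⟨n, ⟨hnUV, hnU⟩, hnV⟩ := ((hKUV.and hKU).and_frequently
    (frequently_inter_nonempty_of_mem_upperLimit hyL (hV.mem_nhds hyV))).exists
  obtain ⟨z, -, hzU, hzV⟩ := hK n U V hU hV hnUV hnU hnV
  exact hUV.le_bot ⟨hzU, hzV⟩

variable [T2Space X]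

lemma eventually_subset_of_upperLimit_subset {K : ℕ → Set X} {S : Set X} (hS : IsCompact S)
    (hKS : ∀ n, K n ⊆ S) {W : Set X} (hW : IsOpen W) (hLW : upperLimit K ⊆ W) :
    ∀ᶠ n in atTop, K n ⊆ W := by
  have hT : Antitone fun N => closure (⋃ n ≥ N, K n) := fun N M hNM =>
    closure_mono (biUnion_subset_biUnion_left fun n hn => le_trans hNM hn)
  obtain ⟨N, hN⟩ := exists_subset_nhds_of_isCompact' hT.directed_ge
    (fun N => hS.of_isClosed_subset isClosed_closure
      (closure_minimal (iUnion₂_subset fun n _ => hKS n) hS.isClosed))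
    (fun _ => isClosed_closure) fun y hy => hW.mem_nhds (hLW hy)
  exact eventually_atTop.mpr ⟨N, fun n hn =>
    (subset_iUnion₂_of_subset n hn subset_rfl).trans (subset_closure.trans hN)⟩

theorem isPreconnected_upperLimit {K : ℕ → Set X} {S : Set X} (hS : IsCompact S)
    (hKS : ∀ n, K n ⊆ S) (hK : ∀ n, IsPreconnected (K n)) {x : X}
    (hx : ∀ U ∈ 𝓝 x, ∀ᶠ n in atTop, (K n ∩ U).Nonempty) :
    IsPreconnected (upperLimit K) := by
  have hL : IsCompact (upperLimit K) :=
    hS.of_isClosed_subset (isClosed_upperLimit K) (upperLimit_subset hS.isClosed hKS)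
  rw [isPreconnected_closed_iff]
  rintro t t' ht ht' hcover ⟨p, hpL, hpt⟩ ⟨q, hqL, hqt'⟩
  by_contra hdisj
  have hAB : Disjoint (upperLimit K ∩ t) (upperLimit K ∩ t') := by
    rw [disjoint_iff_inter_eq_empty, inter_inter_inter_comm, inter_self]
    exact not_nonempty_iff_eq_empty.mp hdisj
  obtain ⟨U, V, hU, hV, hAU, hBV, hUV⟩ :=
    SeparatedNhds.of_isCompact_isCompact (hL.inter_right ht) (hL.inter_right ht') hAB
  have hLUV : upperLimit K ⊆ U ∪ V := fun y hy =>
    (hcover hy).imp (fun h => hAU ⟨hy, h⟩) (fun h => hBV ⟨hy, h⟩)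
  have hKUV := eventually_subset_of_upperLimit_subset hS hKS (hU.union hV) hLUV
  rcases hLUV (mem_upperLimit_of_eventually hx) with hxU | hxV
  · exact disjoint_left.mp (disjoint_upperLimit_of_eventually_subset_union hK hU hV hUV hKUV
      (hx U (hU.mem_nhds hxU))) hqL (hBV ⟨hqL, hqt'⟩)
  · exact disjoint_left.mp (disjoint_upperLimit_of_eventually_subset_union hK hV hU hUV.symm
      (hKUV.mono fun n hn => hn.trans (union_comm U V).le) (hx V (hV.mem_nhds hxV)))
      hpL (hAU ⟨hpL, hpt⟩)

theorem IsPreconnected.iInter_closure_of_antitone {K : ℕ → Set X} {S : Set X}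
    (hS : IsCompact S) (hKS : ∀ n, K n ⊆ S) (hK : ∀ n, IsPreconnected (K n))
    (hanti : Antitone K) : IsPreconnected (⋂ n, closure (K n)) := by
  rcases (⋂ n, closure (K n)).eq_empty_or_nonempty with h | ⟨x, hx⟩
  · rw [h]; exact isPreconnected_empty
  rw [← upperLimit_of_antitone hanti]
  refine isPreconnected_upperLimit hS hKS hK (x := x) fun U hU => Eventually.of_forall fun n => ?_
  obtain ⟨z, hzU, hzK⟩ := mem_closure_iff_nhds.mp (mem_iInter.mp hx n) U hU
  exact ⟨z, hzK, hzU⟩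

end UpperLimit

lemma IsOpenMap.exists_tendsto_of_tendsto {X Y : Type*} [PseudoMetricSpace X] [TopologicalSpace Y]
    {f : X → Y} (hf : IsOpenMap f) {a : X} {w : ℕ → Y} (hw : Tendsto w atTop (𝓝 (f a))) :
    ∃ φ : ℕ → ℕ, Tendsto φ atTop atTop ∧
      ∃ a' : ℕ → X, Tendsto a' atTop (𝓝 a) ∧ ∀ k, f (a' k) = w (φ k) := by
  have h : ∀ k : ℕ, ∃ n, k ≤ n ∧ w n ∈ f '' ball a (1 / (k + 1)) := fun k =>
    ((eventually_ge_atTop k).and (hw ((hf _ isOpen_ball).mem_nhds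
      ⟨a, mem_ball_self (by positivity), rfl⟩))).exists
  choose φ hφ hmem using h
  choose a' ha' hfa' using hmem
  exact ⟨φ, tendsto_atTop_mono hφ tendsto_id, a', tendsto_iff_dist_tendsto_zero.mpr
    (squeeze_zero (fun _ => dist_nonneg) (fun k => (ha' k).le)
      tendsto_one_div_add_atTop_nhds_zero_nat), hfa'⟩

lemma exists_pow_pow_mem_Icc {d : ℕ} (hd : 2 ≤ d) {r t : ℝ} (ht : 1 < t) (htr : t ≤ r) :
    ∃ k : ℕ, t ^ d ^ k ∈ Icc r (r ^ d) := by
  classical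
  have hex : ∃ k : ℕ, r ≤ t ^ d ^ k := by
    obtain ⟨m, hm⟩ := pow_unbounded_of_one_lt r ht
    exact ⟨m, hm.le.trans (pow_le_pow_right₀ ht.le (Nat.lt_pow_self (by omega)).le)⟩
  refine ⟨Nat.find hex, Nat.find_spec hex, ?_⟩
  cases hk : Nat.find hex with
  | zero => simpa using htr.trans (le_self_pow₀ (ht.le.trans htr) (by omega))
  | succ k =>
    have hlt : t ^ d ^ k < r := not_le.mp (Nat.find_min hex (hk ▸ Nat.lt_succ_self k))
    rw [pow_succ, pow_mul]
    exact pow_le_pow_left₀ (by positivity) hlt.le d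

lemma two_pow_mul_norm_le_norm_iterate {E : Type*} [SeminormedAddGroup E] {f : E → E} {R : ℝ}
    (hR : ∀ w, R ≤ ‖w‖ → 2 * ‖w‖ ≤ ‖f w‖) {w : E} (hw : R ≤ ‖w‖) (k : ℕ) :
    2 ^ k * ‖w‖ ≤ ‖f^[k] w‖ := by
  induction k with
  | zero => simp
  | succ k ih =>
    have hk : R ≤ ‖f^[k] w‖ :=
      hw.trans ((le_mul_of_one_le_left (norm_nonneg w) (one_le_pow₀ one_le_two)).trans ih)
    rw [Function.iterate_succ_apply', pow_succ, mul_comm _ 2, mul_assoc]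
    exact (mul_le_mul_of_nonneg_left ih zero_le_two).trans (hR _ hk)

lemma norm_circlePoint (α : AddCircle (1 : ℝ)) : ‖circlePoint α‖ = 1 := Circle.norm_coe _

lemma circlePoint_ne_zero (α : AddCircle (1 : ℝ)) : circlePoint α ≠ 0 := Circle.coe_ne_zero _

lemma circlePoint_nsmul (n : ℕ) (α : AddCircle (1 : ℝ)) :
    circlePoint (n • α) = circlePoint α ^ n := by
  rw [circlePoint, AddCircle.toCircle_nsmul, Circle.coe_pow, circlePoint]

lemma circlePoint_injective : Function.Injective circlePoint :=
  fun _ _ h => AddCircle.injective_toCircle one_ne_zero (Circle.ext h)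

lemma exists_circlePoint_eq {u : ℂ} (hu : ‖u‖ = 1) : ∃ α, circlePoint α = u := by
  obtain ⟨α, hα⟩ := (AddCircle.homeomorphCircle one_ne_zero).surjective
    ⟨u, mem_sphere_zero_iff_norm.mpr hu⟩
  exact ⟨α, congrArg Subtype.val ((AddCircle.homeomorphCircle_apply _ α).symm.trans hα)⟩

lemma tendsto_norm_of_tendsto_circlePoint {l : Filter ℕ} {z : ℕ → ℂ} {α : AddCircle (1 : ℝ)}
    (hz : Tendsto z l (𝓝 (circlePoint α))) : Tendsto (fun n => ‖z n‖) l (𝓝 1) :=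
  norm_circlePoint α ▸ hz.norm

lemma exists_nsmul_eq_and_mem_impression {Ψ : ℂ → ℂ} {d : ℕ} (hd : d ≠ 0) {ξ : ℕ → ℂ}
    {α : AddCircle (1 : ℝ)} {a : ℂ} (hξ1 : ∀ k, 1 < ‖ξ k‖)
    (hpow : Tendsto (fun k => ξ k ^ d) atTop (𝓝 (circlePoint α)))
    (ha : Tendsto (fun k => Ψ (ξ k)) atTop (𝓝 a)) :
    ∃ γ, d • γ = α ∧ a ∈ impression Ψ γ := by
  obtain ⟨C, hC⟩ := (isBounded_range_of_tendsto _ hpow).subset_closedBall 0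
  have hξC : ∀ k, ξ k ∈ closedBall 0 C := fun k => mem_closedBall_zero_iff.mpr
    ((norm_pow (ξ k) d ▸ le_self_pow₀ (hξ1 k).le hd).trans
      (mem_closedBall_zero_iff.mp (hC ⟨k, rfl⟩)))
  obtain ⟨ξ', -, φ, hφ, hξ'⟩ := tendsto_subseq_of_bounded isBounded_closedBall hξC
  have hpow' : ξ' ^ d = circlePoint α :=
    tendsto_nhds_unique (hξ'.pow d) (hpow.comp hφ.tendsto_atTop)
  have hnorm : ‖ξ'‖ = 1 := (pow_eq_one_iff_of_nonneg (norm_nonneg _) hd).mp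
    (by rw [← norm_pow, hpow', norm_circlePoint])
  obtain ⟨γ, rfl⟩ := exists_circlePoint_eq hnorm
  exact ⟨γ, circlePoint_injective (by rw [circlePoint_nsmul, hpow']),
    ξ ∘ φ, fun k => hξ1 _, hξ', ha.comp hφ.tendsto_atTop⟩

/-- A neighbourhood basis of `circlePoint α` within `{z | 1 < ‖z‖}`, in logarithmic
coordinates. -/
def sector (α : AddCircle (1 : ℝ)) (n : ℕ) : Set ℂ :=
  (fun v => circlePoint α * Complex.exp v) '' ({v : ℂ | 0 < v.re} ∩ ball 0 (1 / (n + 1)))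

lemma isPreconnected_sector (α : AddCircle (1 : ℝ)) (n : ℕ) : IsPreconnected (sector α n) :=
  ((convex_halfSpace_re_gt 0).inter (convex_ball 0 _)).isPreconnected.image _
    (by fun_prop)

lemma sector_antitone (α : AddCircle (1 : ℝ)) : Antitone (sector α) := fun _ _ hnm =>
  image_mono (inter_subset_inter_right _ (ball_subset_ball (Nat.one_div_le_one_div hnm)))

lemma norm_mem_Ioc_of_mem_sector {α : AddCircle (1 : ℝ)} {n : ℕ} {ζ : ℂ}
    (hζ : ζ ∈ sector α n) : ‖ζ‖ ∈ Ioc 1 (Real.exp 1) := by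
  obtain ⟨v, ⟨hv0, hv⟩, rfl⟩ := hζ
  rw [norm_mul, norm_circlePoint, one_mul, Complex.norm_exp]
  have hv1 : v.re < 1 := (Complex.re_le_norm v).trans_lt ((mem_ball_zero_iff.mp hv).trans_le
    (div_le_one_of_le₀ (by simp) (by positivity)))
  exact ⟨Real.one_lt_exp_iff.mpr hv0, Real.exp_le_exp.mpr hv1.le⟩

lemma eventually_mem_sector {α : AddCircle (1 : ℝ)} {z : ℕ → ℂ} (hz1 : ∀ k, 1 < ‖z k‖)
    (hz : Tendsto z atTop (𝓝 (circlePoint α))) (n : ℕ) : ∀ᶠ k in atTop, z k ∈ sector α n := by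
  have hc := circlePoint_ne_zero α
  have hlog : Tendsto (fun k => Complex.log (z k / circlePoint α)) atTop (𝓝 0) := by
    have h1 : Tendsto (fun k => z k / circlePoint α) atTop (𝓝 1) := by
      simpa [div_self hc] using hz.div_const (circlePoint α)
    simpa [Function.comp_def] using (continuousAt_clog Complex.one_mem_slitPlane).tendsto.comp h1
  filter_upwards [hlog.eventually_mem (ball_mem_nhds 0 (by positivity : (0 : ℝ) < 1 / (n + 1)))]
    with k hk
  have hzk : z k / circlePoint α ≠ 0 := div_ne_zero (norm_pos_iff.mp (one_pos.trans (hz1 k))) hc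
  refine ⟨_, ⟨?_, hk⟩,
    show circlePoint α * _ = z k by rw [Complex.exp_log hzk, mul_div_cancel₀ _ hc]⟩
  rw [mem_ofPred_eq, Complex.log_re, norm_div, norm_circlePoint, div_one]
  exact Real.log_pos (hz1 k)

lemma impression_eq_iInter_closure_sector (Ψ : ℂ → ℂ) (α : AddCircle (1 : ℝ)) :
    impression Ψ α = ⋂ n, closure (Ψ '' sector α n) := by
  ext w
  refine ⟨fun ⟨z, hz1, hz, hw⟩ => mem_iInter.mpr fun n => mem_closure_of_tendsto hw
    ((eventually_mem_sector hz1 hz n).mono fun k hk => mem_image_of_mem Ψ hk), fun hw => ?_⟩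
  have h : ∀ n : ℕ, ∃ v ∈ {v : ℂ | 0 < v.re} ∩ ball 0 (1 / (n + 1)),
      dist w (Ψ (circlePoint α * Complex.exp v)) < 1 / (n + 1) := fun n => by
    obtain ⟨_, ⟨_, ⟨v, hv, rfl⟩, rfl⟩, hdist⟩ :=
      Metric.mem_closure_iff.mp (mem_iInter.mp hw n) (1 / (n + 1)) (by positivity)
    exact ⟨v, hv, hdist⟩
  choose v hv hdist using h
  have hv0 : Tendsto v atTop (𝓝 0) := tendsto_iff_dist_tendsto_zero.mpr
    (squeeze_zero (fun _ => dist_nonneg) (fun n => (mem_ball.mp (hv n).2).le)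
      tendsto_one_div_add_atTop_nhds_zero_nat)
  refine ⟨fun n => circlePoint α * Complex.exp (v n),
    fun n => (norm_mem_Ioc_of_mem_sector ⟨v n, hv n, rfl⟩).1, ?_, ?_⟩
  · simpa using (Complex.continuous_exp.tendsto 0).comp hv0 |>.const_mul (circlePoint α)
  · exact tendsto_iff_dist_tendsto_zero.mpr (squeeze_zero (fun _ => dist_nonneg)
      (fun n => (dist_comm w _ ▸ hdist n).le) tendsto_one_div_add_atTop_nhds_zero_nat)

section Dynamics

variable {P : Polynomial ℂ}

variable (P) in
lemma continuous_polyMap : Continuous (polyMap P) := P.continuous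

lemma isOpenMap_polyMap (hP : 0 < P.natDegree) : IsOpenMap (polyMap P) := by
  rcases (P.differentiable.differentiableOn.analyticOnNhd isOpen_univ).is_constant_or_isOpen
    isPreconnected_univ with ⟨v, hv⟩ | h
  · have : P = Polynomial.C v := Polynomial.funext fun z => by simpa using hv z (mem_univ z)
    simp [this] at hP
  · exact fun s hs => h s (subset_univ s) hs

lemma exists_two_mul_norm_le_norm_polyMap (hd : 2 ≤ P.natDegree) :
    ∃ R > 0, ∀ w : ℂ, R ≤ ‖w‖ → 2 * ‖w‖ ≤ ‖polyMap P w‖ := by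
  have hdeg : 0 < P.divX.degree := by
    rw [← Polynomial.natDegree_pos_iff_degree_pos, Polynomial.natDegree_divX_eq_natDegree_tsub_one]
    omega
  have h := ((P.divX.tendsto_norm_atTop hdeg tendsto_norm_cobounded_atTop).eventually_ge_atTop
    3).and (tendsto_norm_cobounded_atTop.eventually_ge_atTop (max ‖P.coeff 0‖ 1))
  rw [← comap_norm_atTop, eventually_comap, eventually_atTop] at h
  obtain ⟨R, hR⟩ := h
  refine ⟨max R 1, by positivity, fun w hw => ?_⟩
  obtain ⟨h3, hc⟩ := hR ‖w‖ (le_of_max_le_left hw) w rfl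
  have hP : polyMap P w = P.divX.eval w * w + P.coeff 0 := by
    conv_lhs => rw [polyMap, ← P.divX_mul_X_add]
    simp
  have hw0 : ‖P.coeff 0‖ ≤ ‖w‖ := (le_max_left _ _).trans hc
  calc 2 * ‖w‖ ≤ ‖P.divX.eval w‖ * ‖w‖ - ‖P.coeff 0‖ := by nlinarith [norm_nonneg w]
    _ = ‖polyMap P w - P.coeff 0‖ - ‖P.coeff 0‖ := by rw [hP, add_sub_cancel_right, norm_mul]
    _ ≤ ‖polyMap P w‖ := by linarith [norm_sub_le (polyMap P w) (P.coeff 0)]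

lemma isBounded_filledJulia (hd : 2 ≤ P.natDegree) : Bornology.IsBounded (filledJulia P) := by
  obtain ⟨R, hR0, hR⟩ := exists_two_mul_norm_le_norm_polyMap hd
  refine (isBounded_ball (x := (0 : ℂ)) (r := R)).subset fun z hz => ?_
  rw [mem_ball_zero_iff]
  by_contra! hzR
  have hz : Bornology.IsBounded (range fun n => (polyMap P)^[n] z) := hz
  obtain ⟨M, hM⟩ := hz.subset_closedBall 0
  obtain ⟨k, hk⟩ := pow_unbounded_of_one_lt (M / R) one_lt_two
  have hkM : ‖(polyMap P)^[k] z‖ ≤ M := mem_closedBall_zero_iff.mp (hM ⟨k, rfl⟩)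
  have := two_pow_mul_norm_le_norm_iterate hR hzR k
  rw [div_lt_iff₀ hR0] at hk
  nlinarith [pow_pos (zero_lt_two (α := ℝ)) k]

lemma isCompact_juliaSet (hd : 2 ≤ P.natDegree) : IsCompact (juliaSet P) :=
  Metric.isCompact_of_isClosed_isBounded isClosed_frontier
    ((isBounded_filledJulia hd).closure.subset frontier_subset_closure)

variable (P) in
lemma preimage_polyMap_filledJulia :
    polyMap P ⁻¹' filledJulia P = filledJulia P := by
  ext z
  change Bornology.IsBounded (range fun n => (polyMap P)^[n + 1] z) ↔
    Bornology.IsBounded (range fun n => (polyMap P)^[n] z)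
  rw [← Nat.range_of_succ (fun n => (polyMap P)^[n] z), Bornology.isBounded_union]
  exact ⟨fun h => ⟨Bornology.isBounded_singleton, h⟩, And.right⟩

lemma preimage_polyMap_juliaSet (hP : 0 < P.natDegree) :
    polyMap P ⁻¹' juliaSet P = juliaSet P := by
  rw [juliaSet, (isOpenMap_polyMap hP).preimage_frontier_eq_frontier_preimage
    (continuous_polyMap P), preimage_polyMap_filledJulia]

lemma mapsTo_polyMap_juliaSet (hP : 0 < P.natDegree) :
    MapsTo (polyMap P) (juliaSet P) (juliaSet P) :=
  (preimage_polyMap_juliaSet hP).ge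

end Dynamics

namespace BoettcherMap

variable {P : Polynomial ℂ} {Ψ : ℂ → ℂ}

lemma continuousOn (hΨ : BoettcherMap P Ψ) : ContinuousOn Ψ {z | 1 < ‖z‖} := hΨ.1.continuousOn

lemma bijOn (hΨ : BoettcherMap P Ψ) : BijOn Ψ {z | 1 < ‖z‖} (filledJulia P)ᶜ := hΨ.2.1

lemma map_pow (hΨ : BoettcherMap P Ψ) {z : ℂ} (hz : 1 < ‖z‖) :
    Ψ (z ^ P.natDegree) = polyMap P (Ψ z) := hΨ.2.2 z hz

lemma map_pow_pow (hΨ : BoettcherMap P Ψ) (hP : 0 < P.natDegree) (k : ℕ) {z : ℂ}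
    (hz : 1 < ‖z‖) : Ψ (z ^ P.natDegree ^ k) = (polyMap P)^[k] (Ψ z) := by
  induction k with
  | zero => simp
  | succ k ih =>
    have hzk : 1 < ‖z ^ P.natDegree ^ k‖ := by
      rw [norm_pow]; exact one_lt_pow₀ hz (pow_ne_zero _ hP.ne')
    rw [pow_succ, pow_mul, hΨ.map_pow hzk, ih, Function.iterate_succ_apply']

/-- `Ψ` is bounded near the unit circle: push `ζ` out to a fixed compact annulus by `z ↦ z^d`,
which `Ψ` conjugates to `P`, and `P` expands everything outside a large disc. -/
lemma exists_norm_le (hΨ : BoettcherMap P Ψ) (hd : 2 ≤ P.natDegree) {r : ℝ} (hr : 1 < r) :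
    ∃ M, ∀ ζ : ℂ, 1 < ‖ζ‖ → ‖ζ‖ ≤ r → ‖Ψ ζ‖ ≤ M := by
  obtain ⟨R, -, hR⟩ := exists_two_mul_norm_le_norm_polyMap hd
  set A : Set ℂ := {ζ | ‖ζ‖ ∈ Icc r (r ^ P.natDegree)}
  have hA : IsCompact A := Metric.isCompact_of_isClosed_isBounded
    (isClosed_Icc.preimage continuous_norm)
    ((isBounded_closedBall (x := 0) (r := r ^ P.natDegree)).subset
      fun ζ hζ => mem_closedBall_zero_iff.mpr hζ.2)
  obtain ⟨M₀, hM₀⟩ := (hA.image_of_continuousOn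
    (hΨ.continuousOn.mono fun ζ hζ => hr.trans_le hζ.1)).isBounded.subset_closedBall 0
  refine ⟨max R M₀, fun ζ hζ hζr => ?_⟩
  by_contra! hM
  obtain ⟨k, hk⟩ := exists_pow_pow_mem_Icc hd hζ hζr
  have hmem : ζ ^ P.natDegree ^ k ∈ A := by simpa [A, norm_pow] using hk
  have h1 : ‖(polyMap P)^[k] (Ψ ζ)‖ ≤ M₀ := by
    rw [← hΨ.map_pow_pow (by omega) k hζ]
    exact mem_closedBall_zero_iff.mp (hM₀ ⟨_, hmem, rfl⟩)
  have h2 := two_pow_mul_norm_le_norm_iterate hR ((le_max_left _ _).trans hM.le) k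
  nlinarith [one_le_pow₀ (one_le_two (α := ℝ)) (n := k), le_max_right R M₀, norm_nonneg (Ψ ζ)]

lemma impression_subset_closedBall (hΨ : BoettcherMap P Ψ) (hd : 2 ≤ P.natDegree) :
    ∃ M, ∀ α, impression Ψ α ⊆ closedBall 0 M := by
  obtain ⟨M, hM⟩ := hΨ.exists_norm_le hd one_lt_two
  refine ⟨M, fun α w ⟨z, hz1, hz, hw⟩ => isClosed_closedBall.mem_of_tendsto hw ?_⟩
  filter_upwards [(tendsto_norm_of_tendsto_circlePoint hz).eventually_lt_const one_lt_two]
    with n hn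
  exact mem_closedBall_zero_iff.mpr (hM _ (hz1 n) hn.le)

lemma mapsTo_impression (hΨ : BoettcherMap P Ψ) (hP : 0 < P.natDegree) (γ : AddCircle (1 : ℝ)) :
    MapsTo (polyMap P) (impression Ψ γ) (impression Ψ (P.natDegree • γ)) := by
  rintro w ⟨z, hz1, hz, hw⟩
  refine ⟨fun n => z n ^ P.natDegree, fun n => ?_, ?_, ?_⟩
  · rw [norm_pow]; exact one_lt_pow₀ (hz1 n) hP.ne'
  · rw [circlePoint_nsmul]; exact hz.pow _
  · exact (((continuous_polyMap P).tendsto w).comp hw).congr fun n => (hΨ.map_pow (hz1 n)).symm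

lemma impression_subset_juliaSet (hΨ : BoettcherMap P Ψ) (hd : 2 ≤ P.natDegree)
    (α : AddCircle (1 : ℝ)) : impression Ψ α ⊆ juliaSet P := by
  obtain ⟨M, hM⟩ := hΨ.impression_subset_closedBall hd
  have horbit : ∀ k γ, ∀ w ∈ impression Ψ γ, (polyMap P)^[k] w ∈ closedBall 0 M := by
    intro k
    induction k with
    | zero => exact fun γ w hw => hM γ hw
    | succ k ih =>
      intro γ w hw
      rw [Function.iterate_succ_apply]
      exact ih _ _ (hΨ.mapsTo_impression (by omega) γ hw)
  intro w hw
  have hwK : w ∈ filledJulia P :=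
    isBounded_closedBall.subset (range_subset_iff.mpr fun k => horbit k α w hw)
  obtain ⟨z, hz1, -, hzw⟩ := hw
  rw [juliaSet, frontier_eq_closure_inter_closure]
  exact ⟨subset_closure hwK,
    mem_closure_of_tendsto hzw (Eventually.of_forall fun n => hΨ.bijOn.mapsTo (hz1 n))⟩

lemma exists_mem_impression_of_tendsto (hΨ : BoettcherMap P Ψ) (hd : 2 ≤ P.natDegree)
    {ξ : ℕ → ℂ} {γ : AddCircle (1 : ℝ)} (hξ1 : ∀ n, 1 < ‖ξ n‖)
    (hξ : Tendsto ξ atTop (𝓝 (circlePoint γ))) :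
    ∃ b ∈ impression Ψ γ, ∃ φ : ℕ → ℕ, StrictMono φ ∧
      Tendsto (fun n => Ψ (ξ (φ n))) atTop (𝓝 b) := by
  obtain ⟨M, hM⟩ := hΨ.exists_norm_le hd one_lt_two
  obtain ⟨N, hN⟩ := eventually_atTop.mp
    ((tendsto_norm_of_tendsto_circlePoint hξ).eventually_lt_const one_lt_two)
  obtain ⟨b, -, φ, hφ, hb⟩ := tendsto_subseq_of_bounded (x := fun n => Ψ (ξ (n + N)))
    (isBounded_closedBall (x := 0) (r := M))
    fun n => mem_closedBall_zero_iff.mpr (hM _ (hξ1 _) (hN _ (by omega)).le)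
  have hφN : StrictMono fun n => φ n + N := fun _ _ h => by simpa using hφ h
  exact ⟨b, ⟨fun n => ξ (φ n + N), fun n => hξ1 _, hξ.comp hφN.tendsto_atTop, hb⟩, _, hφN, hb⟩

lemma impression_nsmul_subset_image (hΨ : BoettcherMap P Ψ) (hd : 2 ≤ P.natDegree)
    (γ : AddCircle (1 : ℝ)) : impression Ψ (P.natDegree • γ) ⊆ polyMap P '' impression Ψ γ := by
  rintro v ⟨z, hz1, hz, hv⟩
  set d := P.natDegree
  set c := circlePoint γ
  have hc : c ^ d ≠ 0 := pow_ne_zero _ (circlePoint_ne_zero γ)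
  -- `d`-th roots of the `zₙ` converging to `c`, from the principal branch near `1`
  set ξ : ℕ → ℂ := fun n => c * (z n / c ^ d) ^ (d⁻¹ : ℂ)
  have hξpow : ∀ n, ξ n ^ d = z n := fun n => by
    rw [mul_pow, Complex.cpow_nat_inv_pow _ (by omega), mul_div_cancel₀ _ hc]
  have hξ1 : ∀ n, 1 < ‖ξ n‖ := fun n => by
    rw [← one_lt_pow_iff_of_nonneg (norm_nonneg _) (by omega : d ≠ 0), ← norm_pow, hξpow]
    exact hz1 n
  have hξ : Tendsto ξ atTop (𝓝 c) := by
    have h1 : Tendsto (fun n => z n / c ^ d) atTop (𝓝 1) := by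
      simpa [d, c, circlePoint_nsmul, div_self hc] using hz.div_const (c ^ d)
    simpa using ((continuousAt_cpow_const Complex.one_mem_slitPlane).tendsto.comp h1).const_mul c
  obtain ⟨b, hb, φ, hφ, hbφ⟩ := hΨ.exists_mem_impression_of_tendsto hd hξ1 hξ
  refine ⟨b, hb, tendsto_nhds_unique (((continuous_polyMap P).tendsto b).comp hbφ) ?_⟩
  refine (hv.comp hφ.tendsto_atTop).congr fun n => ?_
  change Ψ (z (φ n)) = polyMap P (Ψ (ξ (φ n)))
  rw [← hΨ.map_pow (hξ1 _), hξpow]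

lemma exists_nsmul_eq_and_mem_impression_of_polyMap_mem (hΨ : BoettcherMap P Ψ)
    (hd : 2 ≤ P.natDegree) {a : ℂ} {α : AddCircle (1 : ℝ)} (ha : polyMap P a ∈ impression Ψ α) :
    ∃ γ, P.natDegree • γ = α ∧ a ∈ impression Ψ γ := by
  obtain ⟨z, hz1, hz, hza⟩ := ha
  obtain ⟨φ, hφ, a', ha', hPa'⟩ := (isOpenMap_polyMap (by omega)).exists_tendsto_of_tendsto hza
  have hξ : ∀ k, ∃ ξ, 1 < ‖ξ‖ ∧ Ψ ξ = a' k ∧ ξ ^ P.natDegree = z (φ k) := by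
    intro k
    have hk : a' k ∉ filledJulia P := fun h =>
      hΨ.bijOn.mapsTo (hz1 (φ k)) (hPa' k ▸ (preimage_polyMap_filledJulia P).ge h)
    obtain ⟨ξ, hξ1, hξa⟩ := hΨ.bijOn.surjOn hk
    refine ⟨ξ, hξ1, hξa, hΨ.bijOn.injOn ?_ (hz1 (φ k)) ?_⟩
    · rw [mem_ofPred_eq, norm_pow]; exact one_lt_pow₀ hξ1 (by omega)
    · rw [hΨ.map_pow hξ1, hξa, hPa']
  choose ξ hξ1 hξa hξpow using hξ
  exact exists_nsmul_eq_and_mem_impression (by omega) hξ1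
    (by simpa only [hξpow, Function.comp_def] using hz.comp hφ) (by simpa only [hξa] using ha')

lemma isPreconnected_impression (hΨ : BoettcherMap P Ψ) (hd : 2 ≤ P.natDegree)
    (α : AddCircle (1 : ℝ)) : IsPreconnected (impression Ψ α) := by
  obtain ⟨M, hM⟩ := hΨ.exists_norm_le hd (Real.one_lt_exp_iff.mpr one_pos)
  have hsector : ∀ n, sector α n ⊆ {z | 1 < ‖z‖} := fun n ζ hζ =>
    (norm_mem_Ioc_of_mem_sector hζ).1
  rw [impression_eq_iInter_closure_sector]
  refine IsPreconnected.iInter_closure_of_antitone (isCompact_closedBall 0 M)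
    (fun n => image_subset_iff.mpr fun ζ hζ => mem_closedBall_zero_iff.mpr
      (hM ζ (norm_mem_Ioc_of_mem_sector hζ).1 (norm_mem_Ioc_of_mem_sector hζ).2))
    (fun n => (isPreconnected_sector α n).image Ψ (hΨ.continuousOn.mono (hsector n)))
    fun _ _ hnm => image_mono (sector_antitone α hnm)

lemma image_impression (hΨ : BoettcherMap P Ψ) (hd : 2 ≤ P.natDegree) (γ : AddCircle (1 : ℝ)) :
    polyMap P '' impression Ψ γ = impression Ψ (P.natDegree • γ) :=
  (hΨ.mapsTo_impression (by omega) γ).image_subset.antisymm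
    (hΨ.impression_nsmul_subset_image hd γ)

end BoettcherMap

def relGraph (Q : Set ℂ) (r : ℂ → ℂ → Prop) : Set (ℂ × ℂ) := {p | p.1 ∈ Q ∧ p.2 ∈ Q ∧ r p.1 p.2}

def finestClass (Q : Set ℂ) (Ψ : ℂ → ℂ) (x : ℂ) : Set ℂ := {y ∈ Q | finestRel Q Ψ x y}

def finestComponent (Q : Set ℂ) (Ψ : ℂ → ℂ) (x : ℂ) : Set ℂ :=
  connectedComponentIn (finestClass Q Ψ x) x

def LiftsFinestRel (Q : Set ℂ) (Ψ : ℂ → ℂ) (f : ℂ → ℂ) (u v : ℂ) : Prop :=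
  ∀ a ∈ Q, f a = u → ∃ b ∈ Q, f b = v ∧ finestRel Q Ψ a b

section FinestRel

variable {Q : Set ℂ} {Ψ : ℂ → ℂ} {f : ℂ → ℂ}

lemma equivalence_finestRel : Equivalence (finestRel Q Ψ) :=
  ⟨fun x _ hr => hr.equivalence.refl x, fun h r hr => hr.equivalence.symm (h r hr),
    fun h₁ h₂ r hr => hr.equivalence.trans (h₁ r hr) (h₂ r hr)⟩

lemma isClosedEquivRespImp_finestRel (hQ : IsClosed Q) :
    IsClosedEquivRespImp Q Ψ (finestRel Q Ψ) where
  equivalence := equivalence_finestRel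
  closedGraph := by
    have h : relGraph Q (finestRel Q Ψ) =
        Q ×ˢ Q ∩ ⋂ r : {r // IsClosedEquivRespImp Q Ψ r}, relGraph Q r.1 := by
      ext p
      simp only [relGraph, finestRel, mem_inter_iff, mem_prod, mem_iInter, Subtype.forall]
      exact ⟨fun ⟨h1, h2, h⟩ => ⟨⟨h1, h2⟩, fun r hr => ⟨h1, h2, h r hr⟩⟩,
        fun ⟨⟨h1, h2⟩, h⟩ => ⟨h1, h2, fun r hr => (h r hr).2.2⟩⟩
    change IsClosed (relGraph Q _)
    rw [h]
    exact (hQ.prod hQ).inter (isClosed_iInter fun r => r.2.closedGraph)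
  resp α _ hx _ hy _ hr := hr.resp α _ hx _ hy

lemma finestClass_eq {x y : ℂ} (h : finestRel Q Ψ x y) :
    finestClass Q Ψ x = finestClass Q Ψ y := by
  have he := equivalence_finestRel (Q := Q) (Ψ := Ψ)
  ext z
  exact and_congr_right fun _ => ⟨he.trans (he.symm h), he.trans h⟩

lemma finestRel_map {g : AddCircle (1 : ℝ) → AddCircle (1 : ℝ)} (hQ : IsClosed Q)
    (hf : Continuous f) (hfQ : MapsTo f Q Q)
    (hImp : ∀ γ, MapsTo f (impression Ψ γ) (impression Ψ (g γ))) {x y : ℂ}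
    (h : finestRel Q Ψ x y) : finestRel Q Ψ (f x) (f y) := fun r hr =>
  h (fun u v => r (f u) (f v))
  { equivalence := ⟨fun _ => hr.equivalence.refl _, hr.equivalence.symm, hr.equivalence.trans⟩
    closedGraph := by
      have h : relGraph Q (fun u v => r (f u) (f v)) =
          Q ×ˢ Q ∩ Prod.map f f ⁻¹' relGraph Q r := by
        ext ⟨u, v⟩
        simp only [relGraph, mem_inter_iff, mem_prod, mem_preimage, Prod.map, mem_ofPred_eq]
        exact ⟨fun ⟨hu, hv, h⟩ => ⟨⟨hu, hv⟩, hfQ hu, hfQ hv, h⟩,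
          fun ⟨⟨hu, hv⟩, _, _, h⟩ => ⟨hu, hv, h⟩⟩
      change IsClosed (relGraph Q fun u v => r (f u) (f v))
      rw [h]
      exact (hQ.prod hQ).inter (hr.closedGraph.preimage (hf.prodMap hf))
    resp := fun γ _ hx _ hy => hr.resp (g γ) _ (hImp γ hx) _ (hImp γ hy) }

lemma mem_finestClass_of_mem_finestComponent {x y : ℂ} (h : y ∈ finestComponent Q Ψ x) :
    x ∈ finestClass Q Ψ x ∧ y ∈ finestClass Q Ψ x :=
  ⟨connectedComponentIn_nonempty_iff.mp ⟨y, h⟩, connectedComponentIn_subset _ _ h⟩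

lemma finestComponent_eq {x y : ℂ} (h : y ∈ finestComponent Q Ψ x) :
    finestComponent Q Ψ y = finestComponent Q Ψ x := by
  rw [finestComponent, ← finestClass_eq (mem_finestClass_of_mem_finestComponent h).2.2,
    ← connectedComponentIn_eq h, finestComponent]

lemma isClosed_setOf_mem_finestComponent (hQ : IsCompact Q) :
    IsClosed {p : ℂ × ℂ | p.2 ∈ finestComponent Q Ψ p.1} := by
  refine IsSeqClosed.isClosed fun {p} {a} hp hpa => ?_
  set K : ℕ → Set ℂ := fun n => finestComponent Q Ψ (p n).1
  have hK : ∀ n, (p n).1 ∈ K n := fun n =>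
    mem_connectedComponentIn (mem_finestClass_of_mem_finestComponent (hp n)).1
  have hKQ : ∀ n, K n ⊆ Q := fun n y hy => (mem_finestClass_of_mem_finestComponent hy).2.1
  have hfst : ∀ U ∈ 𝓝 a.1, ∀ᶠ n in atTop, (K n ∩ U).Nonempty := fun U hU =>
    ((continuous_fst.tendsto a).comp hpa |>.eventually_mem hU).mono fun n hn => ⟨_, hK n, hn⟩
  have hsnd : a.2 ∈ upperLimit K := mem_upperLimit_of_eventually fun U hU =>
    ((continuous_snd.tendsto a).comp hpa |>.eventually_mem hU).mono fun n hn => ⟨_, hp n, hn⟩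
  -- the upper limit is connected and, `≈₀` being closed, lies in the class of `a.1`
  have hL : upperLimit K ⊆ finestClass Q Ψ a.1 := fun w hw =>
    have h := mk_mem_of_mem_upperLimit (isClosedEquivRespImp_finestRel hQ.isClosed).closedGraph
      ((continuous_fst.tendsto a).comp hpa) (fun n y hy => ⟨hKQ n (hK n),
        (mem_finestClass_of_mem_finestComponent hy).2⟩) hw
    h.2
  exact (isPreconnected_upperLimit hQ hKQ (fun n => isPreconnected_connectedComponentIn) hfst)
    |>.subset_connectedComponentIn (mem_upperLimit_of_eventually hfst) hL hsnd

lemma isClosedEquivRespImp_eq_or_mem_finestComponent (hQ : IsCompact Q)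
    (hImpQ : ∀ α, impression Ψ α ⊆ Q) (hImpC : ∀ α, IsPreconnected (impression Ψ α)) :
    IsClosedEquivRespImp Q Ψ (fun u v => u = v ∨ v ∈ finestComponent Q Ψ u) where
  equivalence :=
    ⟨fun _ => .inl rfl,
     fun {u v} => by
       rintro (rfl | h)
       · exact .inl rfl
       · exact .inr (finestComponent_eq h ▸
           mem_connectedComponentIn (mem_finestClass_of_mem_finestComponent h).1),
     fun {u v w} => by
       rintro (rfl | h) (rfl | h')
       exacts [.inl rfl, .inr h', .inr h, .inr (finestComponent_eq h ▸ h')]⟩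
  closedGraph := by
    have h : relGraph Q (fun u v => u = v ∨ v ∈ finestComponent Q Ψ u) =
        Q ×ˢ Q ∩ {p | p.1 = p.2} ∪ {p | p.2 ∈ finestComponent Q Ψ p.1} := by
      ext ⟨u, v⟩
      simp only [relGraph, mem_union, mem_inter_iff, mem_prod, mem_ofPred_eq]
      constructor
      · rintro ⟨hu, hv, rfl | h⟩
        exacts [.inl ⟨⟨hu, hv⟩, rfl⟩, .inr h]
      · rintro (⟨⟨hu, hv⟩, rfl⟩ | h)
        · exact ⟨hu, hv, .inl rfl⟩
        · exact ⟨(mem_finestClass_of_mem_finestComponent h).1.1,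
            (mem_finestClass_of_mem_finestComponent h).2.1, .inr h⟩
    change IsClosed (relGraph Q fun u v => u = v ∨ v ∈ finestComponent Q Ψ u)
    rw [h]
    exact ((hQ.isClosed.prod hQ.isClosed).inter (isClosed_eq continuous_fst continuous_snd)).union
      (isClosed_setOf_mem_finestComponent hQ)
  resp α u hu v hv := .inr <| (hImpC α).subset_connectedComponentIn (F := finestClass Q Ψ u) hu
    (fun w hw => ⟨hImpQ α hw, fun _ hr => hr.resp α u hu w hw⟩) hv

lemma finestComponent_eq_finestClass (hQ : IsCompact Q) (hImpQ : ∀ α, impression Ψ α ⊆ Q)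
    (hImpC : ∀ α, IsPreconnected (impression Ψ α)) (x : ℂ) :
    finestComponent Q Ψ x = finestClass Q Ψ x := by
  refine (connectedComponentIn_subset _ _).antisymm fun y hy => ?_
  rcases hy.2 _ (isClosedEquivRespImp_eq_or_mem_finestComponent hQ hImpQ hImpC) with rfl | h
  exacts [mem_connectedComponentIn hy, h]

lemma finestPartition_eq_image (hQ : IsCompact Q) (hImpQ : ∀ α, impression Ψ α ⊆ Q)
    (hImpC : ∀ α, IsPreconnected (impression Ψ α)) :
    finestPartition Q Ψ = finestClass Q Ψ '' Q := by
  ext D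
  change (∃ x ∈ Q, D = finestComponent Q Ψ x) ↔ ∃ x ∈ Q, finestClass Q Ψ x = D
  simp only [finestComponent_eq_finestClass hQ hImpQ hImpC, eq_comm]

lemma isClosed_relGraph_liftsFinestRel (hQ : IsCompact Q) (hf : Continuous f)
    (hfo : IsOpenMap f) (hpre : f ⁻¹' Q ⊆ Q) : IsClosed (relGraph Q (LiftsFinestRel Q Ψ f)) := by
  refine IsSeqClosed.isClosed fun {p} {c} hp hpc => ?_
  have hu : Tendsto (fun n => (p n).1) atTop (𝓝 c.1) := (continuous_fst.tendsto c).comp hpc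
  have hv : Tendsto (fun n => (p n).2) atTop (𝓝 c.2) := (continuous_snd.tendsto c).comp hpc
  refine ⟨hQ.isClosed.mem_of_tendsto hu (.of_forall fun n => (hp n).1),
    hQ.isClosed.mem_of_tendsto hv (.of_forall fun n => (hp n).2.1), fun a _ hfa => ?_⟩
  -- as `f` is open, `a` is a limit of points `a' k` over a subsequence of the `(p n).1`
  obtain ⟨φ, hφ, a', ha', hfa'⟩ := hfo.exists_tendsto_of_tendsto (hfa ▸ hu)
  have ha'Q : ∀ k, a' k ∈ Q := fun k => hpre (show f (a' k) ∈ Q from hfa' k ▸ (hp (φ k)).1)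
  choose b hbQ hfb hab using fun k => (hp (φ k)).2.2 (a' k) (ha'Q k) (hfa' k)
  obtain ⟨b', hb'Q, ψ, hψ, hbψ⟩ := hQ.tendsto_subseq hbQ
  refine ⟨b', hb'Q, tendsto_nhds_unique ((hf.tendsto b').comp hbψ) ?_, ?_⟩
  · exact (hv.comp (hφ.comp hψ.tendsto_atTop)).congr fun k => (hfb (ψ k)).symm
  · exact ((isClosedEquivRespImp_finestRel hQ.isClosed).closedGraph.mem_of_tendsto
      ((ha'.comp hψ.tendsto_atTop).prodMk_nhds hbψ)
      (.of_forall fun k => ⟨ha'Q _, hbQ _, hab _⟩)).2.2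

lemma LiftsFinestRel.refl (u : ℂ) : LiftsFinestRel Q Ψ f u u :=
  fun a ha hau => ⟨a, ha, hau, equivalence_finestRel.refl a⟩

lemma LiftsFinestRel.trans {u v w : ℂ} (huv : LiftsFinestRel Q Ψ f u v)
    (hvw : LiftsFinestRel Q Ψ f v w) : LiftsFinestRel Q Ψ f u w := fun a ha hau =>
  let ⟨b, hb, hbv, hab⟩ := huv a ha hau
  let ⟨c, hc, hcw, hbc⟩ := hvw b hb hbv
  ⟨c, hc, hcw, equivalence_finestRel.trans hab hbc⟩

lemma isClosedEquivRespImp_liftsFinestRel {g : AddCircle (1 : ℝ) → AddCircle (1 : ℝ)}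
    (hQ : IsCompact Q) (hf : Continuous f) (hfo : IsOpenMap f) (hpre : f ⁻¹' Q ⊆ Q)
    (hImpQ : ∀ α, impression Ψ α ⊆ Q) (hImp : ∀ γ, impression Ψ (g γ) ⊆ f '' impression Ψ γ)
    (hImpPre : ∀ a α, f a ∈ impression Ψ α → ∃ γ, g γ = α ∧ a ∈ impression Ψ γ) :
    IsClosedEquivRespImp Q Ψ (fun u v => LiftsFinestRel Q Ψ f u v ∧ LiftsFinestRel Q Ψ f v u) := by
  have hlift : ∀ α, ∀ u ∈ impression Ψ α, ∀ v ∈ impression Ψ α, LiftsFinestRel Q Ψ f u v := by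
    rintro α u hu v hv a ha rfl
    obtain ⟨γ, rfl, haγ⟩ := hImpPre a α hu
    obtain ⟨b, hb, rfl⟩ := hImp γ hv
    exact ⟨b, hImpQ γ hb, rfl, fun _ hr => hr.resp γ a haγ b hb⟩
  refine ⟨⟨fun u => ⟨.refl u, .refl u⟩, And.symm,
    fun ⟨huv, hvu⟩ ⟨hvw, hwv⟩ => ⟨huv.trans hvw, hwv.trans hvu⟩⟩, ?_,
    fun α u hu v hv => ⟨hlift α u hu v hv, hlift α v hv u hu⟩⟩
  have hL := isClosed_relGraph_liftsFinestRel (Ψ := Ψ) hQ hf hfo hpre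
  convert hL.inter (hL.preimage continuous_swap) using 1
  ext ⟨u, v⟩
  simp only [relGraph, mem_inter_iff, mem_preimage, Prod.swap_prod_mk, mem_ofPred_eq]
  tauto

lemma image_finestClass {g : AddCircle (1 : ℝ) → AddCircle (1 : ℝ)}
    (hQ : IsCompact Q) (hf : Continuous f) (hfo : IsOpenMap f) (hfQ : f ⁻¹' Q = Q)
    (hImpQ : ∀ α, impression Ψ α ⊆ Q) (hImp : ∀ γ, f '' impression Ψ γ = impression Ψ (g γ))
    (hImpPre : ∀ a α, f a ∈ impression Ψ α → ∃ γ, g γ = α ∧ a ∈ impression Ψ γ)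
    {x : ℂ} (hx : x ∈ Q) : f '' finestClass Q Ψ x = finestClass Q Ψ (f x) := by
  refine subset_antisymm ?_ fun y hy => ?_
  · rintro _ ⟨y, ⟨hy, hxy⟩, rfl⟩
    exact ⟨hfQ.ge hy, finestRel_map hQ.isClosed hf hfQ.ge
      (fun γ => (mapsTo_image f _).mono_right (hImp γ).le) hxy⟩
  · obtain ⟨b, hb, hfb, hxb⟩ := (hy.2 _ (isClosedEquivRespImp_liftsFinestRel hQ hf hfo hfQ.le
      hImpQ (fun γ => (hImp γ).ge) hImpPre)).1 x hx rfl
    exact ⟨b, ⟨hb, hxb⟩, hfb⟩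

end FinestRel

theorem finestPartition_forward_invariant_general (P : Polynomial ℂ) (hd : 2 ≤ P.natDegree)
    (Ψ : ℂ → ℂ) (hΨ : BoettcherMap P Ψ) :
    ∀ D ∈ finestPartition (juliaSet P) Ψ,
      polyMap P '' D ∈ finestPartition (juliaSet P) Ψ := by
  have hP : 0 < P.natDegree := by omega
  have hJ := isCompact_juliaSet hd
  have hImpJ := hΨ.impression_subset_juliaSet hd
  rw [finestPartition_eq_image hJ hImpJ (hΨ.isPreconnected_impression hd)]
  rintro _ ⟨x, hx, rfl⟩
  refine ⟨polyMap P x, mapsTo_polyMap_juliaSet hP hx, ?_⟩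
  exact (image_finestClass hJ (continuous_polyMap P) (isOpenMap_polyMap hP)
    (preimage_polyMap_juliaSet hP) hImpJ (hΨ.image_impression hd)
    (fun _ _ => hΨ.exists_nsmul_eq_and_mem_impression_of_polyMap_mem hd) hx).symm

/-- The finest partition `𝒟` of the connected Julia set `J_P` is invariant:
the image of any element of `𝒟` under `P` is again an element of `𝒟`. -/
theorem finestPartition_forward_invariant (P : Polynomial ℂ) (hd : 2 ≤ P.natDegree)
    (hconn : IsConnected (juliaSet P)) (Ψ : ℂ → ℂ) (hΨ : BoettcherMap P Ψ) :
    ∀ D ∈ finestPartition (juliaSet P) Ψ,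
      polyMap P '' D ∈ finestPartition (juliaSet P) Ψ :=
  finestPartition_forward_invariant_general P hd Ψ hΨ

end
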